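/- arXiv:1905.00173 — 2 statements merged into one kernel-verified Lean document; each statement's English description precedes it below -/
import Mathlib

section
/- The boundary-flattening transformation preserves specular symmetry: for every point y = (y₁,y₂,0) on the flattened boundary and every w ∈ ℝ³, A^{-1}(y)(Rw) = R_x (A^{-1}(y) w), where R = diag(1,1,−1) and R_x is the specular reflection with respect to the unit outward normal of the surface {x₃ = ρ(x₁,x₂)} at the point η⃗(y₁,y₂). -/
noncomputable section
open Real Set
set_option linter.unusedVariables false

/-- The space `ℝ³`. -/
abbrev V3 : Type := Fin 3 → ℝ

/-- Euclidean dot product on `ℝ³`. -/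
def dot3 (x y : V3) : ℝ := ∑ i, x i * y i

/-- Euclidean norm on `ℝ³`. -/
def nrm3 (x : V3) : ℝ := Real.sqrt (dot3 x x)

/-- Specular reflection `R_x v = v − 2(n·v) n` w.r.t. a unit vector `n`. -/
def reflSpec (n v : V3) : V3 := v - (2 * dot3 n v) • n

/-- `ρ₁ = ∂₁ρ`. -/
def rho1 (ρ : ℝ × ℝ → ℝ) (p : ℝ × ℝ) : ℝ := fderiv ℝ ρ p (1, 0)

/-- `ρ₂ = ∂₂ρ`. -/
def rho2 (ρ : ℝ × ℝ → ℝ) (p : ℝ × ℝ) : ℝ := fderiv ℝ ρ p (0, 1)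

/-- The boundary parametrization `η⃗(y₁,y₂) = (y₁, y₂, ρ(y₁,y₂))`. -/
def etaMap (ρ : ℝ × ℝ → ℝ) (p : ℝ × ℝ) : V3 := ![p.1, p.2, ρ p]

/-- The (outward) normal vector `n⃗(y₁,y₂) = (−∂₁ρ, −∂₂ρ, 1) = ∂₁η⃗ × ∂₂η⃗`. -/
def nMap (ρ : ℝ × ℝ → ℝ) (p : ℝ × ℝ) : V3 := ![-(rho1 ρ p), -(rho2 ρ p), 1]

/-- The boundary-flattening map `φ⃗⁻¹(y) = η⃗(y₁,y₂) + y₃ n⃗(y₁,y₂)`. -/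
def phiInv (ρ : ℝ × ℝ → ℝ) (y : V3) : V3 :=
  etaMap ρ (y 0, y 1) + y 2 • nMap ρ (y 0, y 1)

/-- The Jacobian `A⁻¹(y) = Dφ⃗⁻¹(y)` of the boundary-flattening map, as the linear map
with columns `∂₁η⃗ + y₃∂₁n⃗`, `∂₂η⃗ + y₃∂₂n⃗` and `n⃗`. -/
def AinvMap (ρ : ℝ × ℝ → ℝ) (y : V3) : V3 → V3 := fun w => fderiv ℝ (phiInv ρ) y w

/-- The velocity flip `R = diag(1,1,−1)`. -/
def Rflip (w : V3) : V3 := ![w 0, w 1, -(w 2)]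

private lemma aux_pos (x y : ℝ) : 0 < x * x + y * y + 1 := by
  nlinarith [mul_self_nonneg x, mul_self_nonneg y]

private lemma aux_refl (a b s : ℝ) (hsne : s ≠ 0) (hs2 : s * s = a * a + b * b + 1)
    (w0 w1 w2 : ℝ) :
    (![w0, w1, w0 * a + w1 * b] + (-w2) • ![-a, -b, (1:ℝ)])
      = reflSpec (s⁻¹ • ![-a, -b, (1:ℝ)]) (![w0, w1, w0 * a + w1 * b] + w2 • ![-a, -b, (1:ℝ)]) := by
  have hdots : dot3 (s⁻¹ • ![-a, -b, (1:ℝ)])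
      (![w0, w1, w0 * a + w1 * b] + w2 • ![-a, -b, (1:ℝ)]) = s⁻¹ * (w2 * (s * s)) := by
    rw [hs2]
    simp [dot3, Fin.sum_univ_three, Pi.add_apply, Pi.smul_apply, smul_eq_mul]
    ring
  rw [reflSpec, hdots]
  funext i
  fin_cases i <;>
    simp [Pi.add_apply, Pi.sub_apply, Pi.smul_apply, smul_eq_mul] <;>
    field_simp <;>
    ring


/-- The boundary-flattening transformation preserves specular
symmetry. For every point `y = (y₁,y₂,0)` on the flattened boundary and every `w ∈ ℝ³`,
`A⁻¹(y)(Rw) = R_x(A⁻¹(y)w)`, where `R = diag(1,1,−1)` and `R_x` is the specular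
reflection w.r.t. the unit outward normal of the surface `{x₃ = ρ(x₁,x₂)}` at
`η⃗(y₁,y₂)`. -/
theorem boundary_flattening_preserves_specular_symmetry
    (ρ : ℝ × ℝ → ℝ) (hρ : ContDiff ℝ (⊤ : ℕ∞) ρ) (y₁ y₂ : ℝ) (w : V3) :
    AinvMap ρ ![y₁, y₂, 0] (Rflip w)
      = reflSpec ((nrm3 (nMap ρ (y₁, y₂)))⁻¹ • nMap ρ (y₁, y₂))
          (AinvMap ρ ![y₁, y₂, 0] w) := by
  classical
  set p : ℝ × ℝ := (y₁, y₂) with hp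
  set Y : V3 := ![y₁, y₂, 0] with hY
  have hρ' : ContDiff ℝ (↑(⊤:ℕ∞)) ρ := hρ.of_le (by simp)
  have hdρ : ContDiff ℝ (↑(⊤:ℕ∞)) (fderiv ℝ ρ) := (contDiff_infty_iff_fderiv.mp hρ').2
  -- differentiability of nMap
  have hn : ContDiff ℝ (↑(⊤:ℕ∞)) (nMap ρ) := by
    apply contDiff_pi.mpr
    intro i
    fin_cases i
    · simpa [nMap, rho1] using (hdρ.clm_apply contDiff_const).neg
    · simpa [nMap, rho2] using (hdρ.clm_apply contDiff_const).neg
    · simpa [nMap] using contDiff_const (c := (1:ℝ))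
  -- the linear projection q
  set q : V3 →L[ℝ] ℝ × ℝ :=
    (ContinuousLinearMap.proj 0).prod (ContinuousLinearMap.proj 1) with hq
  have hqY : q Y = p := by simp [hq, hY, hp]
  -- derivative of etaMap at p
  set E : (ℝ × ℝ) →L[ℝ] V3 :=
    ContinuousLinearMap.pi
      ![ContinuousLinearMap.fst ℝ ℝ ℝ, ContinuousLinearMap.snd ℝ ℝ ℝ, fderiv ℝ ρ p] with hE
  have hEeta : HasFDerivAt (etaMap ρ) E p := by
    apply hasFDerivAt_pi.mpr
    intro i
    fin_cases i
    · simpa [etaMap] using hasFDerivAt_fst (p := p)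
    · simpa [etaMap] using hasFDerivAt_snd (p := p)
    · simpa [etaMap] using (hρ'.differentiable (by simp) p).hasFDerivAt
  have h1 : HasFDerivAt (fun y : V3 => etaMap ρ (y 0, y 1)) (E.comp q) Y := by
    rw [← hqY] at hEeta
    exact hEeta.comp Y (q.hasFDerivAt (x := Y))
  -- derivative of the normal part
  set N : V3 →L[ℝ] V3 := (fderiv ℝ (nMap ρ) p).comp q with hN
  have h2 : HasFDerivAt (fun y : V3 => nMap ρ (y 0, y 1)) N Y := by
    have hnp : HasFDerivAt (nMap ρ) (fderiv ℝ (nMap ρ) p) (q Y) := by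
      rw [hqY]; exact ((hn.differentiable (by simp)) p).hasFDerivAt
    exact hnp.comp Y (q.hasFDerivAt (x := Y))
  have h3 : HasFDerivAt (fun y : V3 => y 2)
      (ContinuousLinearMap.proj 2 : V3 →L[ℝ] ℝ) Y := hasFDerivAt_apply 2 Y
  have hsm := h3.smul h2
  have htot := h1.add hsm
  have hphi : phiInv ρ = fun y : V3 => etaMap ρ (y 0, y 1) + y 2 • nMap ρ (y 0, y 1) := rfl
  have hY2 : Y 2 = 0 := rfl
  have hA : ∀ v : V3, AinvMap ρ Y v = E (q v) + v 2 • nMap ρ p := by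
    intro v
    have hYp : (Y 0, Y 1) = p := rfl
    rw [AinvMap, hphi, (show HasFDerivAt (fun y : V3 => etaMap ρ (y 0, y 1) + y 2 • nMap ρ (y 0, y 1)) _ Y from htot).fderiv]
    simp [hY2, hYp]
  -- coordinates
  set a : ℝ := rho1 ρ p with ha
  set b : ℝ := rho2 ρ p with hb
  have hDz : ∀ z : ℝ × ℝ, fderiv ℝ ρ p z = z.1 * a + z.2 * b := by
    intro z
    have hz : z = z.1 • ((1:ℝ), (0:ℝ)) + z.2 • ((0:ℝ), (1:ℝ)) := by
      simp [Prod.ext_iff]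
    conv_lhs => rw [hz]
    rw [map_add, map_smul, map_smul]
    simp [ha, hb, rho1, rho2, smul_eq_mul]
  have hEv : ∀ v : V3, E (q v) = ![v 0, v 1, v 0 * a + v 1 * b] := by
    intro v
    have hqv : q v = (v 0, v 1) := rfl
    rw [hqv]
    funext i
    fin_cases i
    · rfl
    · rfl
    · exact hDz (v 0, v 1)
  have hAv : ∀ v : V3, AinvMap ρ Y v = ![v 0, v 1, v 0 * a + v 1 * b] + v 2 • ![-a, -b, (1:ℝ)] := by
    intro v
    rw [hA v, hEv v, nMap, ← ha, ← hb]
  -- norm facts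
  set s : ℝ := nrm3 (nMap ρ p) with hs
  have hdot : dot3 (nMap ρ p) (nMap ρ p) = a * a + b * b + 1 := by
    simp [dot3, nMap, Fin.sum_univ_three, ← ha, ← hb]
  have hdpos : (0:ℝ) < dot3 (nMap ρ p) (nMap ρ p) := by
    rw [hdot]; exact aux_pos a b
  have hs2 : s * s = a * a + b * b + 1 := by
    rw [hs, nrm3, Real.mul_self_sqrt hdpos.le, hdot]
  have hspos : (0:ℝ) < s := by
    rw [hs, nrm3]
    exact Real.sqrt_pos.mpr hdpos
  have hsne : s ≠ 0 := ne_of_gt hspos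
  -- finish
  have hnm : nMap ρ p = ![-a, -b, (1:ℝ)] := by rw [nMap, ← ha, ← hb]
  show AinvMap ρ Y (Rflip w) = reflSpec (s⁻¹ • nMap ρ p) (AinvMap ρ Y w)
  rw [hAv, hAv, hnm]
  simp only [show Rflip w 0 = w 0 from rfl, show Rflip w 1 = w 1 from rfl,
    show Rflip w 2 = -(w 2) from rfl]
  exact aux_refl a b s hsne hs2 (w 0) (w 1) (w 2)
end
end

section
/- For the boundary-flattening transformation, the symmetric matrix C(y) := A^{-T}(y) A^{-1}(y) satisfies, at every point y with y₃ = 0, the vanishing of the off-diagonal entries C₁₃(y) = C₂₃(y) = C₃₁(y) = C₃₂(y) = 0; consequently R C(y) R = C(y), and whenever A^{-1}(y) is invertible also R C(y)^{-1} R = C(y)^{-1}, where R = diag(1,1,−1). In particular the second-order coefficient of the transformed Landau equation is continuous across the flattened boundary under the mirror extension. -/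
noncomputable section
open Real Set
set_option linter.unusedVariables false
set_option maxHeartbeats 1000000

/-- The Jacobian matrix `A⁻¹(y)` of the boundary-flattening map. -/
def AinvMat (ρ : ℝ × ℝ → ℝ) (y : V3) : Matrix (Fin 3) (Fin 3) ℝ :=
  fun i j => fderiv ℝ (phiInv ρ) y (Pi.single j 1) i

/-- `C(y) = A^{-T}(y) A⁻¹(y)`. -/
def Cmat (ρ : ℝ × ℝ → ℝ) (y : V3) : Matrix (Fin 3) (Fin 3) ℝ :=
  Matrix.transpose (AinvMat ρ y) * AinvMat ρ y

/-- The matrix `R = diag(1,1,−1)`. -/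
def Rmat : Matrix (Fin 3) (Fin 3) ℝ := Matrix.diagonal ![1, 1, -1]

open ContinuousLinearMap in
lemma AinvMat_at0 (ρ : ℝ × ℝ → ℝ) (hρ : ContDiff ℝ (⊤ : ℕ∞) ρ) (y₁ y₂ : ℝ) :
    AinvMat ρ ![y₁, y₂, 0] = Matrix.of
      ![![1, 0, -(rho1 ρ (y₁, y₂))],
        ![0, 1, -(rho2 ρ (y₁, y₂))],
        ![rho1 ρ (y₁, y₂), rho2 ρ (y₁, y₂), 1]] := by
  set y₀ : V3 := ![y₁, y₂, 0] with hy₀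
  set p : ℝ × ℝ := (y₁, y₂) with hp
  have hg : HasFDerivAt (fun y : V3 => ((y 0, y 1) : ℝ × ℝ))
      ((proj 0 : V3 →L[ℝ] ℝ).prod (proj 1)) y₀ :=
    ((proj (R := ℝ) (φ := fun _ : Fin 3 => ℝ) 0).prod (proj 1)).hasFDerivAt
  have hgy : (fun y : V3 => ((y 0, y 1) : ℝ × ℝ)) y₀ = p := by simp [hy₀, hp]
  have hD : HasFDerivAt ρ (fderiv ℝ ρ p) p :=
    ((hρ.differentiable (by simp)) p).hasFDerivAt
  have hρg : HasFDerivAt (fun y : V3 => ρ (y 0, y 1))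
      ((fderiv ℝ ρ p).comp ((proj 0 : V3 →L[ℝ] ℝ).prod (proj 1))) y₀ := by
    refine HasFDerivAt.comp y₀ ?_ hg
    have : ((y₀ 0, y₀ 1) : ℝ × ℝ) = p := by simp [hy₀, hp]
    rw [this]; exact hD
  have hC1 : ContDiff ℝ (⊤ : ℕ∞) (rho1 ρ) := by
    exact (hρ.fderiv_right (by simp)).clm_apply contDiff_const
  have hC2 : ContDiff ℝ (⊤ : ℕ∞) (rho2 ρ) := by
    exact (hρ.fderiv_right (by simp)).clm_apply contDiff_const
  have hd1 : DifferentiableAt ℝ (fun y : V3 => -(rho1 ρ (y 0, y 1))) y₀ := by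
    exact (((hC1.differentiable (by simp)).differentiableAt).comp y₀
      hg.differentiableAt).neg
  have hd2 : DifferentiableAt ℝ (fun y : V3 => -(rho2 ρ (y 0, y 1))) y₀ := by
    exact (((hC2.differentiable (by simp)).differentiableAt).comp y₀
      hg.differentiableAt).neg
  set L0 : V3 →L[ℝ] ℝ := proj 0 + (-(rho1 ρ p)) • proj 2 with hL0
  set L1 : V3 →L[ℝ] ℝ := proj 1 + (-(rho2 ρ p)) • proj 2 with hL1
  set L2 : V3 →L[ℝ] ℝ :=
    (fderiv ℝ ρ p).comp ((proj 0 : V3 →L[ℝ] ℝ).prod (proj 1)) + proj 2 with hL2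
  have hL : HasFDerivAt (phiInv ρ) (ContinuousLinearMap.pi ![L0, L1, L2]) y₀ := by
    refine hasFDerivAt_pi'' fun i => ?_
    fin_cases i
    · simp only [phiInv, etaMap, nMap, Pi.add_apply, Pi.smul_apply,
        Matrix.cons_val_zero, smul_eq_mul, Fin.isValue]
      have := (hasFDerivAt_apply (𝕜 := ℝ) (0 : Fin 3) y₀).add
        ((hasFDerivAt_apply (𝕜 := ℝ) (2 : Fin 3) y₀).mul hd1.hasFDerivAt)
      convert this using 1 <;>
      ext w <;>
      simp [hy₀, hp, L0, proj]
    · simp only [phiInv, etaMap, nMap, Pi.add_apply, Pi.smul_apply,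
        Matrix.cons_val_one, Matrix.head_cons, smul_eq_mul, Fin.isValue]
      have := (hasFDerivAt_apply (𝕜 := ℝ) (1 : Fin 3) y₀).add
        ((hasFDerivAt_apply (𝕜 := ℝ) (2 : Fin 3) y₀).mul hd2.hasFDerivAt)
      convert this using 1 <;>
      ext w <;>
      simp [hy₀, hp, L1, proj]
    · simp only [phiInv, etaMap, nMap, Pi.add_apply, Pi.smul_apply,
        Matrix.cons_val_two, Matrix.tail_cons, Matrix.head_cons, smul_eq_mul,
        mul_one, Fin.isValue]
      have := hρg.add (hasFDerivAt_apply (𝕜 := ℝ) (2 : Fin 3) y₀)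
      convert this using 1 <;>
      ext w <;>
      simp [L2, proj]
  funext i j
  show fderiv ℝ (phiInv ρ) y₀ (Pi.single j 1) i = _
  rw [hL.fderiv]
  have hs0 : ((Pi.single (0 : Fin 3) (1:ℝ) : V3) 0, (Pi.single (0 : Fin 3) (1:ℝ) : V3) 1) = ((1,0) : ℝ × ℝ) := by
    norm_num
  have hs1 : ((Pi.single (1 : Fin 3) (1:ℝ) : V3) 0, (Pi.single (1 : Fin 3) (1:ℝ) : V3) 1) = ((0,1) : ℝ × ℝ) := by
    norm_num
  have hs2 : ((Pi.single (2 : Fin 3) (1:ℝ) : V3) 0, (Pi.single (2 : Fin 3) (1:ℝ) : V3) 1) = ((0,0) : ℝ × ℝ) := by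
    norm_num [Pi.single_apply]
    exact ⟨by decide, by decide⟩
  fin_cases j <;> fin_cases i <;>
    · simp only [ContinuousLinearMap.pi_apply, hL0, hL1, hL2, Matrix.cons_val_zero,
        Matrix.cons_val_one, Matrix.head_cons, Matrix.cons_val_two, Matrix.tail_cons,
        ContinuousLinearMap.add_apply, ContinuousLinearMap.smul_apply,
        ContinuousLinearMap.proj_apply, ContinuousLinearMap.comp_apply,
        ContinuousLinearMap.prod_apply, Matrix.of_apply, Fin.isValue, hs0, hs1, hs2]
      norm_num [rho1, rho2, hp, Prod.mk_zero_zero, Pi.single_apply, Fin.ext_iff,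
        Pi.single_eq_same, Pi.single_eq_of_ne (by decide : (0:Fin 3) ≠ 2),
        Pi.single_eq_of_ne (by decide : (1:Fin 3) ≠ 2),
        Pi.single_eq_of_ne (by decide : (2:Fin 3) ≠ 0),
        Pi.single_eq_of_ne (by decide : (2:Fin 3) ≠ 1),
        Pi.single_eq_of_ne (by decide : (0:Fin 3) ≠ 1),
        Pi.single_eq_of_ne (by decide : (1:Fin 3) ≠ 0)]


/-- Structure of `C = A^{-T}A⁻¹` at the flattened boundary. At every
point `y` with `y₃ = 0`, the off-diagonal entries `C₁₃ = C₂₃ = C₃₁ = C₃₂` of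
`C(y) = A^{-T}(y)A⁻¹(y)` vanish; consequently `R C(y) R = C(y)` and, whenever `A⁻¹(y)` is
invertible, also `R C(y)⁻¹ R = C(y)⁻¹`, where `R = diag(1,1,−1)`. -/
theorem Cmat_structure_at_flattened_boundary
    (ρ : ℝ × ℝ → ℝ) (hρ : ContDiff ℝ (⊤ : ℕ∞) ρ) (y₁ y₂ : ℝ) :
    Cmat ρ ![y₁, y₂, 0] 0 2 = 0 ∧
    Cmat ρ ![y₁, y₂, 0] 1 2 = 0 ∧
    Cmat ρ ![y₁, y₂, 0] 2 0 = 0 ∧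
    Cmat ρ ![y₁, y₂, 0] 2 1 = 0 ∧
    Rmat * Cmat ρ ![y₁, y₂, 0] * Rmat = Cmat ρ ![y₁, y₂, 0] ∧
    (IsUnit (AinvMat ρ ![y₁, y₂, 0]).det →
      Rmat * (Cmat ρ ![y₁, y₂, 0])⁻¹ * Rmat = (Cmat ρ ![y₁, y₂, 0])⁻¹) := by
  have hA := AinvMat_at0 ρ hρ y₁ y₂
  have h02 : Cmat ρ ![y₁, y₂, 0] 0 2 = 0 := by
    simp [Cmat, hA, Matrix.mul_apply, Fin.sum_univ_three, Matrix.transpose_apply, Matrix.vecHead, Matrix.vecTail]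
    try ring
  have h12 : Cmat ρ ![y₁, y₂, 0] 1 2 = 0 := by
    simp [Cmat, hA, Matrix.mul_apply, Fin.sum_univ_three, Matrix.transpose_apply, Matrix.vecHead, Matrix.vecTail]
    try ring
  have h20 : Cmat ρ ![y₁, y₂, 0] 2 0 = 0 := by
    simp [Cmat, hA, Matrix.mul_apply, Fin.sum_univ_three, Matrix.transpose_apply, Matrix.vecHead, Matrix.vecTail]
    try ring
  have h21 : Cmat ρ ![y₁, y₂, 0] 2 1 = 0 := by
    simp [Cmat, hA, Matrix.mul_apply, Fin.sum_univ_three, Matrix.transpose_apply, Matrix.vecHead, Matrix.vecTail]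
    try ring
  have hRCR : Rmat * Cmat ρ ![y₁, y₂, 0] * Rmat = Cmat ρ ![y₁, y₂, 0] := by
    ext i j
    fin_cases i <;> fin_cases j <;>
      simp [Rmat, Cmat, hA, Matrix.mul_apply, Fin.sum_univ_three,
        Matrix.transpose_apply, Matrix.diagonal, Matrix.vecHead, Matrix.vecTail]
  refine ⟨h02, h12, h20, h21, hRCR, fun hdet => ?_⟩
  have hRR : Rmat * Rmat = 1 := by
    ext i j
    fin_cases i <;> fin_cases j <;>
      simp [Rmat, Matrix.mul_apply, Fin.sum_univ_three, Matrix.diagonal, Matrix.one_apply]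
  have hRinv : Rmat⁻¹ = Rmat := Matrix.inv_eq_right_inv hRR
  conv_rhs => rw [← hRCR]
  rw [Matrix.mul_inv_rev, Matrix.mul_inv_rev, hRinv, Matrix.mul_assoc]
end
end
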